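/- Let d, n ≥ 1, M ≥ 0 and σ ≥ 0. Let V : ℝ^d × ℝ^d → M_n(ℂ) be measurable with Frobenius norm |V(x,ξ)| ≤ M for all x, ξ, such that V(x, ξ + k) = V(x, ξ) for every k ∈ ℤ^d (ℤ^d-periodicity in the second variable). Let η > 0 and ε ∈ (0, η], and suppose |V(x, ξ) − V(x', ξ)| ≤ σ for all ξ and all x, x' with |x − x'| ≤ √d · η. Define V⁰(x) := ∫_{[0,1]^d} V(x, ξ) dξ. Then there exists a constant C > 0, depending only on d, such that for every γ ∈ ℤ^d: | η^{−d} ∫_{□_γ^η} ( V(x, x/ε) − V⁰(x) ) dx | ≤ C ( σ + M ε/η ). -/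

import Mathlib

/-! Freezing the slow variable at a corner `x₀` of the cell costs at most `2σ` pointwise, by
the modulus of continuity. What remains is the integral of `g(x/ε)` over a cube of side `η`,
where `g = V(x₀, ·) - V⁰(x₀)` is `ℤ^d`-periodic with mean zero. After rescaling by `ε` the cube
has side `L = η/ε`. The unit lattice cells lying inside it contribute nothing, and they cover
everything except a boundary layer of volume at most `L^d - max(L-2, 0)^d ≤ 2dL^{d-1}`, on which
`|g| ≤ 2M`. Scaling back gives the term `M ε/η`. -/

open MeasureTheory

noncomputable section

/-- `ℝ^d` with its Euclidean structure. -/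
abbrev Ed (d : ℕ) := EuclideanSpace ℝ (Fin d)

/-- A vector of `ℝ^d` given by its coordinates. -/
def toEd {d : ℕ} (f : Fin d → ℝ) : Ed d := WithLp.toLp 2 f

/-- The cell `□_γ^η = η•γ + [0,η]^d` of the rescaled lattice `ηℤ^d`. -/
def cell (d : ℕ) (η : ℝ) (γ : Fin d → ℤ) : Set (Ed d) :=
  {x | ∀ i, η * γ i ≤ x i ∧ x i ≤ η * γ i + η}

/-- Frobenius norm of a complex `n × n` matrix. -/
def frob {n : ℕ} (A : Matrix (Fin n) (Fin n) ℂ) : ℝ :=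
  Real.sqrt (∑ i, ∑ k, ‖A i k‖ ^ 2)

open Set
open scoped Pointwise

lemma pow_sub_max_sub_pow_le {a t : ℝ} (ha : 0 ≤ a) (ht : 0 ≤ t) (n : ℕ) :
    a ^ n - max (a - t) 0 ^ n ≤ n * t * a ^ (n - 1) := by
  set b := max (a - t) 0
  have hb : 0 ≤ b := le_max_right _ _
  have hba : b ≤ a := max_le (by linarith) ha
  calc a ^ n - b ^ n ≤ |a ^ n - b ^ n| := le_abs_self _
    _ ≤ |a - b| * n * max |a| |b| ^ (n - 1) := abs_pow_sub_pow_le ..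
    _ ≤ t * n * a ^ (n - 1) := by
        rw [abs_of_nonneg (sub_nonneg.2 hba), abs_of_nonneg ha, abs_of_nonneg hb,
          max_eq_left hba]
        gcongr
        linarith [le_max_left (a - t) 0]
    _ = n * t * a ^ (n - 1) := by ring

lemma norm_setIntegral_le_of_norm_sub_le {α E : Type*} [MeasurableSpace α]
    [NormedAddCommGroup E] [NormedSpace ℝ E] {μ : Measure α} {s : Set α} {F G : α → E} {C : ℝ}
    (hF : IntegrableOn F s μ) (hG : IntegrableOn G s μ) (hs : μ s < ⊤)
    (hFG : ∀ x ∈ s, ‖F x - G x‖ ≤ C) :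
    ‖∫ x in s, F x ∂μ‖ ≤ ‖∫ x in s, G x ∂μ‖ + C * μ.real s := by
  have h := norm_setIntegral_le_of_norm_le_const hs hFG
  rw [integral_sub hF hG] at h
  linarith [norm_sub_norm_le (∫ x in s, F x ∂μ) (∫ x in s, G x ∂μ)]

section Periodic

variable {ι : Type*}

def latticeIndex (x : ι → ℝ) : ι → ℤ := fun i => ⌊x i⌋

lemma measurable_latticeIndex : Measurable (latticeIndex (ι := ι)) :=
  measurable_pi_lambda _ fun i => Int.measurable_floor.comp (measurable_pi_apply i)

lemma latticeIndex_add_intCast (x : ι → ℝ) (k : ι → ℤ) :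
    latticeIndex (x + fun i => (k i : ℝ)) = latticeIndex x + k :=
  funext fun i => Int.floor_add_intCast (x i) (k i)

lemma latticeIndex_preimage_zero :
    latticeIndex ⁻¹' {0} = univ.pi fun _ : ι => Ico (0 : ℝ) 1 := by
  ext x
  simp [latticeIndex, funext_iff, Int.floor_eq_zero_iff]

variable [Fintype ι] {E : Type*} [NormedAddCommGroup E] [NormedSpace ℝ E] {f : (ι → ℝ) → E}

lemma setIntegral_latticeIndex_preimage_singleton
    (hper : ∀ x (k : ι → ℤ), f (x + fun i => (k i : ℝ)) = f x) (k : ι → ℤ) :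
    ∫ x in latticeIndex ⁻¹' {k}, f x = ∫ x in Icc 0 1, f x := by
  have hpre : (· + fun i => (k i : ℝ)) ⁻¹' (latticeIndex ⁻¹' {k}) = latticeIndex ⁻¹' {0} := by
    ext x
    simp [latticeIndex_add_intCast]
  rw [← (measurePreserving_add_right volume _).setIntegral_preimage_emb
    (measurableEmbedding_addRight _), hpre, latticeIndex_preimage_zero]
  simp only [hper]
  exact setIntegral_congr_set Measure.univ_pi_Ico_ae_eq_Icc

lemma setIntegral_latticeIndex_preimage_eq_zero
    (hper : ∀ x (k : ι → ℤ), f (x + fun i => (k i : ℝ)) = f x)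
    (hmean : ∫ x in Icc 0 1, f x = 0) {K : Finset (ι → ℤ)}
    (hf : IntegrableOn f (latticeIndex ⁻¹' (K : Set (ι → ℤ)))) :
    ∫ x in latticeIndex ⁻¹' (K : Set (ι → ℤ)), f x = 0 := by
  rw [← biUnion_preimage_singleton, Finset.set_biUnion_coe, integral_biUnion_finset K
    (fun k _ => measurable_latticeIndex (measurableSet_singleton k))
    (fun k _ k' _ hkk' => (disjoint_singleton.2 hkk').preimage _)
    (fun k hk => hf.mono_set (preimage_mono (singleton_subset_iff.2 hk)))]
  simp [setIntegral_latticeIndex_preimage_singleton hper, hmean]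

section CubeLatticeCells

variable [DecidableEq ι]

/-- Indices of the unit lattice cells `k + [0,1)^ι` contained in the cube `c + [0,L]^ι`. -/
def cubeLatticeCells (c : ι → ℝ) (L : ℝ) : Finset (ι → ℤ) :=
  Fintype.piFinset fun i => Finset.Ico ⌈c i⌉ ⌊c i + L⌋

lemma latticeIndex_preimage_cubeLatticeCells_subset (c : ι → ℝ) (L : ℝ) :
    latticeIndex ⁻¹' (cubeLatticeCells c L : Set (ι → ℤ)) ⊆ Icc c (fun i => c i + L) := by
  intro x hx
  simp only [cubeLatticeCells, mem_preimage, Finset.mem_coe, Fintype.mem_piFinset,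
    Finset.mem_Ico, latticeIndex] at hx
  refine ⟨fun i => (Int.ceil_le.1 (hx i).1).trans (Int.floor_le _), fun i => ?_⟩
  have hfloor : (⌊x i⌋ : ℝ) + 1 ≤ ⌊c i + L⌋ := by exact_mod_cast (hx i).2
  linarith [Int.lt_floor_add_one (x i), Int.floor_le (c i + L)]

lemma Icc_subset_latticeIndex_preimage_cubeLatticeCells (c : ι → ℝ) (L : ℝ) :
    Icc (fun i => c i + 1) (fun i => c i + L - 1)
      ⊆ latticeIndex ⁻¹' (cubeLatticeCells c L : Set (ι → ℤ)) := by
  intro x hx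
  simp only [cubeLatticeCells, mem_preimage, Finset.mem_coe, Fintype.mem_piFinset,
    Finset.mem_Ico, latticeIndex]
  refine fun i => ⟨?_, ?_⟩
  · calc ⌈c i⌉ ≤ ⌊c i⌋ + 1 := Int.ceil_le_floor_add_one _
      _ = ⌊c i + 1⌋ := (Int.floor_add_one _).symm
      _ ≤ ⌊x i⌋ := Int.floor_mono (hx.1 i)
  · calc ⌊x i⌋ < ⌊x i⌋ + 1 := lt_add_one _
      _ = ⌊x i + 1⌋ := (Int.floor_add_one _).symm
      _ ≤ ⌊c i + L⌋ := Int.floor_mono (by linarith [hx.2 i])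

end CubeLatticeCells

theorem norm_setIntegral_Icc_le_of_periodic {M L : ℝ}
    (hf : AEStronglyMeasurable f) (hfM : ∀ x, ‖f x‖ ≤ M)
    (hper : ∀ x (k : ι → ℤ), f (x + fun i => (k i : ℝ)) = f x)
    (hmean : ∫ x in Icc 0 1, f x = 0) (c : ι → ℝ) (hL : 0 ≤ L) :
    ‖∫ x in Icc c (fun i => c i + L), f x‖
      ≤ M * (L ^ Fintype.card ι - max (L - 2) 0 ^ Fintype.card ι) := by
  classical
  set Q := Icc c (fun i => c i + L)
  set U := latticeIndex ⁻¹' (cubeLatticeCells c L : Set (ι → ℤ))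
  have hUQ : U ⊆ Q := latticeIndex_preimage_cubeLatticeCells_subset c L
  have hinner := Icc_subset_latticeIndex_preimage_cubeLatticeCells c L
  have hQfin : volume Q ≠ ⊤ := by simp [Q, Real.volume_Icc_pi]
  have hfQ : IntegrableOn f Q := Measure.integrableOn_of_bounded hQfin hf (ae_of_all _ hfM)
  have hM : 0 ≤ M := (norm_nonneg _).trans (hfM 0)
  calc ‖∫ x in Q, f x‖ = ‖∫ x in Q \ U, f x‖ := by
        rw [← integral_inter_add_sdiff
            (measurable_latticeIndex (Finset.finite_toSet _).measurableSet) hfQ,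
          inter_eq_right.2 hUQ, setIntegral_latticeIndex_preimage_eq_zero hper hmean
            (hfQ.mono_set hUQ), zero_add]
    _ ≤ M * volume.real (Q \ U) :=
        norm_setIntegral_le_of_norm_le_const
          ((measure_mono sdiff_subset).trans_lt hQfin.lt_top) fun x _ => hfM x
    _ ≤ M * volume.real (Q \ Icc (fun i => c i + 1) (fun i => c i + L - 1)) := by
        gcongr
        exact measure_ne_top_of_subset sdiff_subset hQfin
    _ = M * (L ^ Fintype.card ι - max (L - 2) 0 ^ Fintype.card ι) := by
        rw [measureReal_sdiff (hinner.trans hUQ) measurableSet_Icc hQfin]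
        have hside : ∀ i, c i + L - 1 - (c i + 1) = L - 2 := fun i => by ring
        simp [Measure.real, Real.volume_Icc_pi, Q, hside, ENNReal.toReal_ofReal hL,
          ENNReal.toReal_ofReal']

end Periodic

section Cell

variable {d : ℕ} {E : Type*} [NormedAddCommGroup E] [NormedSpace ℝ E]

lemma cell_eq_preimage_Icc (η : ℝ) (γ : Fin d → ℤ) :
    cell d η γ = WithLp.ofLp ⁻¹' Icc (fun i => η * γ i) (fun i => η * γ i + η) := by
  ext x
  simp [cell, Pi.le_def, forall_and]

lemma cell_one_zero : cell d 1 0 = WithLp.ofLp ⁻¹' Icc 0 1 := by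
  ext x
  simp [cell, Pi.le_def, forall_and]

lemma inv_smul_cell {ε : ℝ} (hε : 0 < ε) (η : ℝ) (γ : Fin d → ℤ) :
    ε⁻¹ • cell d η γ
      = WithLp.ofLp ⁻¹' Icc (fun i => η * γ i / ε) (fun i => η * γ i / ε + η / ε) := by
  ext x
  rw [mem_inv_smul_set_iff₀ hε.ne']
  simp only [cell, mem_ofPred_eq, mem_preimage, mem_Icc, Pi.le_def, PiLp.smul_apply,
    smul_eq_mul, ← forall_and, ← add_div, div_le_iff₀ hε, le_div_iff₀ hε, mul_comm ε]

lemma setIntegral_preimage_ofLp {ι : Type*} [Fintype ι] (s : Set (ι → ℝ))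
    (F : EuclideanSpace ℝ ι → E) :
    ∫ x in WithLp.ofLp ⁻¹' s, F x = ∫ y in s, F (WithLp.toLp 2 y) :=
  ((PiLp.volume_preserving_toLp ι).setIntegral_preimage_emb
    (MeasurableEquiv.toLp 2 (ι → ℝ)).measurableEmbedding F _).symm

lemma volume_cell (η : ℝ) (γ : Fin d → ℤ) : volume (cell d η γ) = ENNReal.ofReal η ^ d := by
  rw [cell_eq_preimage_Icc, (PiLp.volume_preserving_ofLp (Fin d)).measure_preimage
    measurableSet_Icc.nullMeasurableSet, Real.volume_Icc_pi]
  simp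

lemma volume_real_cell {η : ℝ} (hη : 0 ≤ η) (γ : Fin d → ℤ) :
    volume.real (cell d η γ) = η ^ d := by
  simp [Measure.real, volume_cell, ENNReal.toReal_ofReal hη]

omit [NormedSpace ℝ E] in
lemma integrableOn_cell_of_bounded {F : Ed d → E} (hF : AEStronglyMeasurable F) {C : ℝ}
    (hC : ∀ x, ‖F x‖ ≤ C) (η : ℝ) (γ : Fin d → ℤ) : IntegrableOn F (cell d η γ) :=
  Measure.integrableOn_of_bounded (by simp [volume_cell]) hF (ae_of_all _ hC)

lemma norm_setIntegral_unit_cell_le {g : Ed d → E} {M : ℝ} (hg : ∀ ξ, ‖g ξ‖ ≤ M) :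
    ‖∫ ξ in cell d 1 0, g ξ‖ ≤ M := by
  have h := norm_setIntegral_le_of_norm_le_const (μ := volume) (s := cell d 1 0)
    (by simp [volume_cell]) fun ξ _ => hg ξ
  rwa [volume_real_cell zero_le_one, one_pow, mul_one] at h

lemma dist_le_of_mem_cell {η : ℝ} (hη : 0 ≤ η) {γ : Fin d → ℤ} {x : Ed d}
    (hx : x ∈ cell d η γ) : dist x (toEd fun i => η * γ i) ≤ Real.sqrt d * η := by
  have hcoord : ∀ i, dist (x i) (η * γ i) ^ 2 ≤ η ^ 2 := fun i => by
    rw [Real.dist_eq]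
    exact pow_le_pow_left₀ (abs_nonneg _)
      (abs_sub_le_iff.2 ⟨by linarith [hx i], by linarith [hx i]⟩) 2
  calc dist x (toEd fun i => η * γ i) ≤ Real.sqrt (∑ _i : Fin d, η ^ 2) := by
        rw [EuclideanSpace.dist_eq]
        exact Real.sqrt_le_sqrt (Finset.sum_le_sum fun i _ => hcoord i)
    _ = Real.sqrt d * η := by simp [Real.sqrt_mul, Real.sqrt_sq hη]

theorem norm_setIntegral_cell_comp_inv_smul_le {g : Ed d → E} {M η ε : ℝ}
    (hg : AEStronglyMeasurable g) (hgM : ∀ ξ, ‖g ξ‖ ≤ M)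
    (hper : ∀ ξ (k : Fin d → ℤ), g (ξ + toEd fun i => (k i : ℝ)) = g ξ)
    (hmean : ∫ ξ in cell d 1 0, g ξ = 0) (hη : 0 ≤ η) (hε : 0 < ε) (γ : Fin d → ℤ) :
    ‖∫ x in cell d η γ, g (ε⁻¹ • x)‖ ≤ M * (η ^ d - max (η - 2 * ε) 0 ^ d) := by
  have hbox := norm_setIntegral_Icc_le_of_periodic (f := fun y => g (WithLp.toLp 2 y))
    (hg.comp_measurePreserving (PiLp.volume_preserving_toLp _)) (fun y => hgM _)
    (fun y k => hper _ k) (by rwa [cell_one_zero, setIntegral_preimage_ofLp] at hmean)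
    (fun i => η * γ i / ε) (div_nonneg hη hε.le)
  rw [Fintype.card_fin] at hbox
  rw [Measure.setIntegral_comp_smul_of_pos _ _ _ (inv_pos.2 hε), finrank_euclideanSpace_fin,
    inv_smul_cell hε, setIntegral_preimage_ofLp, norm_smul, inv_pow, inv_inv,
    Real.norm_of_nonneg (pow_nonneg hε.le d)]
  have hscale : ε ^ d * ((η / ε) ^ d - max (η / ε - 2) 0 ^ d)
      = η ^ d - max (η - 2 * ε) 0 ^ d := by
    rw [mul_sub, ← mul_pow, ← mul_pow, mul_max_of_nonneg _ _ hε.le, mul_div_cancel₀ _ hε.ne',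
      mul_sub, mul_div_cancel₀ _ hε.ne', mul_zero, mul_comm ε 2]
  calc ε ^ d * ‖_‖ ≤ ε ^ d * (M * ((η / ε) ^ d - max (η / ε - 2) 0 ^ d)) := by gcongr
    _ = M * (η ^ d - max (η - 2 * ε) 0 ^ d) := by rw [← hscale]; ring

theorem norm_setIntegral_cell_sub_le [CompleteSpace E] {V : Ed d → Ed d → E} {M σ η ε : ℝ}
    (hV : StronglyMeasurable (Function.uncurry V)) (hVM : ∀ x ξ, ‖V x ξ‖ ≤ M)
    (hper : ∀ x ξ (k : Fin d → ℤ), V x (ξ + toEd fun i => (k i : ℝ)) = V x ξ)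
    (hη : 0 ≤ η) (hε : 0 < ε)
    (hσ : ∀ ξ x x', dist x x' ≤ Real.sqrt d * η → ‖V x ξ - V x' ξ‖ ≤ σ) (γ : Fin d → ℤ) :
    ‖∫ x in cell d η γ, (V x (ε⁻¹ • x) - ∫ ξ in cell d 1 0, V x ξ)‖
      ≤ 2 * σ * η ^ d + 2 * M * (η ^ d - max (η - 2 * ε) 0 ^ d) := by
  set x₀ : Ed d := toEd fun i => η * γ i
  set V₀ : Ed d → E := fun x => ∫ ξ in cell d 1 0, V x ξ
  have hsection : ∀ x, StronglyMeasurable (V x) := fun x =>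
    hV.comp_measurable measurable_prodMk_left
  have hVint : ∀ x, IntegrableOn (V x) (cell d 1 0) := fun x =>
    integrableOn_cell_of_bounded (hsection x).aestronglyMeasurable (hVM x) 1 0
  have hV₀M : ∀ x, ‖V₀ x‖ ≤ M := fun x => norm_setIntegral_unit_cell_le (hVM x)
  have hfrozen : ‖∫ x in cell d η γ, (V x₀ (ε⁻¹ • x) - V₀ x₀)‖
      ≤ 2 * M * (η ^ d - max (η - 2 * ε) 0 ^ d) := by
    refine norm_setIntegral_cell_comp_inv_smul_le (g := fun ξ => V x₀ ξ - V₀ x₀)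
      ((hsection x₀).aestronglyMeasurable.sub aestronglyMeasurable_const)
      (fun ξ => (norm_sub_le _ _).trans (by linarith [hVM x₀ ξ, hV₀M x₀]))
      (fun ξ k => by simp only [hper]) ?_ hη hε γ
    rw [integral_sub (hVint x₀) (integrableOn_const (by simp [volume_cell])), setIntegral_const,
      volume_real_cell zero_le_one, one_pow, one_smul, sub_self]
  have hfreeze : ∀ x ∈ cell d η γ,
      ‖(V x (ε⁻¹ • x) - V₀ x) - (V x₀ (ε⁻¹ • x) - V₀ x₀)‖ ≤ 2 * σ := fun x hx => by
    have hx₀ := dist_le_of_mem_cell hη hx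
    have hV₀σ : ‖V₀ x - V₀ x₀‖ ≤ σ := by
      rw [← integral_sub (hVint x) (hVint x₀)]
      exact norm_setIntegral_unit_cell_le fun ξ => hσ ξ x x₀ hx₀
    rw [sub_sub_sub_comm]
    linarith [norm_sub_le (V x (ε⁻¹ • x) - V x₀ (ε⁻¹ • x)) (V₀ x - V₀ x₀), hσ (ε⁻¹ • x) x x₀ hx₀]
  have hsmul : Measurable fun x : Ed d => ε⁻¹ • x := measurable_const_smul _
  have hint : IntegrableOn (fun x => V x (ε⁻¹ • x) - V₀ x) (cell d η γ) :=
    integrableOn_cell_of_bounded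
      ((hV.comp_measurable (measurable_id.prodMk hsmul)).sub
        hV.integral_prod_right').aestronglyMeasurable
      (fun x => (norm_sub_le _ _).trans (add_le_add (hVM _ _) (hV₀M x))) η γ
  have hint_frozen : IntegrableOn (fun x => V x₀ (ε⁻¹ • x) - V₀ x₀) (cell d η γ) :=
    integrableOn_cell_of_bounded
      (((hsection x₀).comp_measurable hsmul).aestronglyMeasurable.sub aestronglyMeasurable_const)
      (fun x => (norm_sub_le _ _).trans (add_le_add (hVM _ _) (hV₀M x₀))) η γ
  calc ‖∫ x in cell d η γ, (V x (ε⁻¹ • x) - V₀ x)‖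
      ≤ ‖∫ x in cell d η γ, (V x₀ (ε⁻¹ • x) - V₀ x₀)‖ + 2 * σ * volume.real (cell d η γ) :=
        norm_setIntegral_le_of_norm_sub_le hint hint_frozen (by simp [volume_cell]) hfreeze
    _ ≤ 2 * σ * η ^ d + 2 * M * (η ^ d - max (η - 2 * ε) 0 ^ d) := by
        rw [volume_real_cell hη]
        linarith

end Cell

section Frobenius

variable {n : ℕ}

def matrixToL2 (A : Matrix (Fin n) (Fin n) ℂ) : EuclideanSpace ℂ (Fin n × Fin n) :=
  WithLp.toLp 2 fun pq => A pq.1 pq.2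

lemma frob_eq_norm_matrixToL2 (A : Matrix (Fin n) (Fin n) ℂ) : frob A = ‖matrixToL2 A‖ := by
  rw [EuclideanSpace.norm_eq, frob, Fintype.sum_prod_type]
  rfl

lemma matrixToL2_sub (A B : Matrix (Fin n) (Fin n) ℂ) :
    matrixToL2 (A - B) = matrixToL2 A - matrixToL2 B := rfl

lemma measurable_matrixToL2 {X : Type*} [MeasurableSpace X] {F : X → Matrix (Fin n) (Fin n) ℂ}
    (hF : ∀ p q, Measurable fun x => F x p q) : Measurable fun x => matrixToL2 (F x) :=
  (WithLp.measurable_toLp 2 _).comp (measurable_pi_lambda _ fun pq => hF pq.1 pq.2)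

lemma matrixToL2_integral {X : Type*} [MeasurableSpace X] {μ : Measure X}
    {F : X → Matrix (Fin n) (Fin n) ℂ} (hF : Integrable (fun x => matrixToL2 (F x)) μ) :
    matrixToL2 (fun p q => ∫ x, F x p q ∂μ) = ∫ x, matrixToL2 (F x) ∂μ := by
  ext pq
  rw [eval_integral_piLp (integrable_piLp_iff.1 hF)]
  rfl

variable {d : ℕ}

lemma frob_cell_average_eq {V : Ed d → Ed d → Matrix (Fin n) (Fin n) ℂ} {M : ℝ}
    (hV : Measurable fun xy : Ed d × Ed d => matrixToL2 (V xy.1 xy.2))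
    (hVM : ∀ x ξ, ‖matrixToL2 (V x ξ)‖ ≤ M) (c : ℂ) (η ε : ℝ) (γ : Fin d → ℤ) :
    frob (fun p q => c * ∫ x in cell d η γ, (V x (ε⁻¹ • x) p q - ∫ ξ in cell d 1 0, V x ξ p q))
      = ‖c‖ * ‖∫ x in cell d η γ,
          (matrixToL2 (V x (ε⁻¹ • x)) - ∫ ξ in cell d 1 0, matrixToL2 (V x ξ))‖ := by
  have hentry : ∀ x, matrixToL2 (fun p q => V x (ε⁻¹ • x) p q - ∫ ξ in cell d 1 0, V x ξ p q)
      = matrixToL2 (V x (ε⁻¹ • x)) - ∫ ξ in cell d 1 0, matrixToL2 (V x ξ) := fun x => by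
    rw [← matrixToL2_integral (integrableOn_cell_of_bounded
      (hV.comp measurable_prodMk_left).aestronglyMeasurable (hVM x) 1 0)]
    rfl
  have hint : IntegrableOn
      (fun x => matrixToL2 (V x (ε⁻¹ • x)) - ∫ ξ in cell d 1 0, matrixToL2 (V x ξ)) (cell d η γ) :=
    integrableOn_cell_of_bounded
      ((hV.comp (measurable_id.prodMk (measurable_const_smul _))).aestronglyMeasurable.sub
        hV.stronglyMeasurable.integral_prod_right'.aestronglyMeasurable)
      (fun x => (norm_sub_le _ _).trans
        (add_le_add (hVM _ _) (norm_setIntegral_unit_cell_le (hVM x)))) η γ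
  have h := matrixToL2_integral (μ := volume.restrict (cell d η γ))
    (F := fun x p q => V x (ε⁻¹ • x) p q - ∫ ξ in cell d 1 0, V x ξ p q)
    (by simp only [hentry]; exact hint)
  simp only [hentry] at h
  rw [← norm_smul, ← h]
  exact frob_eq_norm_matrixToL2 _

end Frobenius

/-- Single-scale (`m = 1`) cell-average estimate of Section 3.4 for
locally periodic fast oscillating coefficients: for `V(x,ξ)` bounded by `M`,
`ℤ^d`-periodic in `ξ`, with modulus of continuity `σ` in `x` at scale `√d·η`, and
`V⁰(x) = ∫_{[0,1]^d} V(x,ξ)dξ`, the average of `V(x, x/ε) − V⁰(x)` over any cell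
`□_γ^η` is at most `C(σ + M ε/η)`, with `C` depending only on `d`. -/
theorem stmt_13 (d : ℕ) (hd : 1 ≤ d) :
    ∃ C : ℝ, 0 < C ∧
      ∀ (n : ℕ), 1 ≤ n →
      ∀ (M σ : ℝ), 0 ≤ M → 0 ≤ σ →
      ∀ (V : Ed d → Ed d → Matrix (Fin n) (Fin n) ℂ),
        (∀ p q, Measurable fun xy : Ed d × Ed d => V xy.1 xy.2 p q) →
        (∀ x ξ : Ed d, frob (V x ξ) ≤ M) →
        (∀ (x ξ : Ed d) (k : Fin d → ℤ),
          V x (ξ + toEd fun i => (k i : ℝ)) = V x ξ) →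
      ∀ (η ε : ℝ), 0 < η → 0 < ε → ε ≤ η →
        (∀ (ξ x x' : Ed d), dist x x' ≤ Real.sqrt d * η →
          frob (V x ξ - V x' ξ) ≤ σ) →
      ∀ γ : Fin d → ℤ,
        frob (fun p q => ((η : ℂ) ^ d)⁻¹ *
            ∫ x in cell d η γ,
              (V x (ε⁻¹ • x) p q - ∫ ξ in cell d 1 0, V x ξ p q))
          ≤ C * (σ + M * ε / η) := by
  have hdR : (1 : ℝ) ≤ d := by exact_mod_cast hd
  refine ⟨4 * d, by positivity, ?_⟩
  intro n _ M σ hM hσ V hVmeas hVM hVper η ε hη hε _ hVσ γ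
  have hW : Measurable fun xy : Ed d × Ed d => matrixToL2 (V xy.1 xy.2) :=
    measurable_matrixToL2 hVmeas
  have hWM : ∀ x ξ, ‖matrixToL2 (V x ξ)‖ ≤ M := fun x ξ =>
    (frob_eq_norm_matrixToL2 _).symm.trans_le (hVM x ξ)
  have hcell := norm_setIntegral_cell_sub_le hW.stronglyMeasurable hWM
    (fun x ξ k => by rw [hVper]) hη.le hε
    (fun ξ x x' hxx' => by
      rw [← matrixToL2_sub, ← frob_eq_norm_matrixToL2]
      exact hVσ ξ x x' hxx') γ
  have hpow := pow_sub_max_sub_pow_le hη.le (by positivity : (0 : ℝ) ≤ 2 * ε) d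
  refine (frob_cell_average_eq hW hWM _ η ε γ).trans_le ?_
  rw [norm_inv, norm_pow, Complex.norm_real, Real.norm_of_nonneg hη.le]
  calc (η ^ d)⁻¹ * ‖∫ x in cell d η γ,
        (matrixToL2 (V x (ε⁻¹ • x)) - ∫ ξ in cell d 1 0, matrixToL2 (V x ξ))‖
      ≤ (η ^ d)⁻¹ * (2 * σ * η ^ d + 2 * M * (d * (2 * ε) * η ^ (d - 1))) := by
        gcongr
        exact hcell.trans (by gcongr)
    _ = 2 * σ + 4 * d * (M * ε / η) := by
        obtain ⟨m, rfl⟩ := Nat.exists_eq_add_of_le' hd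
        rw [Nat.add_sub_cancel]
        field_simp
        ring
    _ ≤ 4 * d * (σ + M * ε / η) := by
        rw [mul_add]
        gcongr
        linarith

end
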